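/- arXiv:1008.0617 — 9 statements merged into one kernel-verified Lean document; each statement's English description precedes it below -/
import Mathlib

section
/- Let A, B be n×n matrices over a field with A invertible, and let u, v, x, y be n-tuples of scalars with d(u), d(v), d(x), d(y) the corresponding diagonal matrices. Then the determinant of the 2n×2n block matrix [[A·d(u), B·d(x)], [A·d(v), B·d(y)]] equals det(A)² times the determinant of the n×n matrix whose (i,j) entry is (uᵢyⱼ − vᵢxⱼ)·(A⁻¹B)ᵢⱼ. -/
/-!
Factoring out `diag(A, A)` reduces the claim to the blocks `d(u), M d(x), d(v), M d(y)` with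
`M = A⁻¹B`. Since `d(u)` and `d(v)` commute, Silvester's formula `det [[P, Q], [R, S]] = det (PS - RQ)`
(valid whenever `P` and `R` commute) applies, and `d(u) M d(y) - d(v) M d(x)` is exactly the matrix
with entries `(uᵢyⱼ - vᵢxⱼ) Mᵢⱼ`.
-/

open Matrix

namespace Matrix

variable {R : Type*} [CommRing R] {n : Type*} [Fintype n] [DecidableEq n]

theorem det_mul_det_fromBlocks_of_commute {A B C D : Matrix n n R} (hAC : Commute A C) :
    A.det * (fromBlocks A B C D).det = A.det * (A * D - C * B).det := by
  have hreduce : fromBlocks 1 0 (-C) A * fromBlocks A B C D = fromBlocks A B 0 (A * D - C * B) := by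
    rw [fromBlocks_multiply, hAC.eq]
    simp [sub_eq_neg_add]
  have h := congrArg det hreduce
  rwa [det_mul, det_fromBlocks_zero₁₂, det_fromBlocks_zero₂₁, det_one, one_mul] at h

theorem det_fromBlocks_of_commute {A B C D : Matrix n n R} (hAC : Commute A C) :
    (fromBlocks A B C D).det = (A * D - C * B).det := by
  let φ := (Polynomial.C : R →+* Polynomial R).mapMatrix (m := n)
  let ev := Polynomial.evalRingHom (0 : R)
  -- `X + A` has monic determinant, so it can be cancelled, and it specialises to `A` at `X = 0`.
  let A' := charmatrix (-A)
  have hreg : IsLeftRegular A'.det := (charpoly_monic (-A)).isRegular.left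
  have hcomm : Commute A' (φ C) :=
    (scalar_commute _ (Commute.all _) _).sub_left (hAC.neg_left.map φ)
  have hevφ : ∀ M, (φ M).map ev = M := fun M => by ext; simp [ev, φ]
  have hevA' : A'.map ev = A := by
    ext i j
    rcases eq_or_ne i j with rfl | hij
    · simp [A', ev]
    · simp [A', ev, hij]
  have key := congrArg ev <|
    hreg (det_mul_det_fromBlocks_of_commute (B := φ B) (D := φ D) hcomm)
  simpa only [RingHom.map_det, map_sub, map_mul, RingHom.mapMatrix_apply, fromBlocks_map, hevA',
    hevφ] using key

theorem det_fromBlocks_diagonal_mul_diagonal (M : Matrix n n R) (u v x y : n → R) :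
    (fromBlocks (diagonal u) (M * diagonal x) (diagonal v) (M * diagonal y)).det
      = (of fun i j => (u i * y j - v i * x j) * M i j).det := by
  rw [det_fromBlocks_of_commute (commute_diagonal u v)]
  congr 1
  ext i j
  simp only [sub_apply, diagonal_mul, mul_diagonal, of_apply]
  ring

end Matrix

theorem block_det_diagonal_formula {K : Type*} [Field K] {n : Type*} [Fintype n] [DecidableEq n]
    (A B : Matrix n n K) (hA : IsUnit A.det) (u v x y : n → K) :
    (fromBlocks (A * diagonal u) (B * diagonal x) (A * diagonal v) (B * diagonal y)).det
      = A.det ^ 2 * (Matrix.of fun i j => (u i * y j - v i * x j) * (A⁻¹ * B) i j).det := by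
  have hfactor : fromBlocks (A * diagonal u) (B * diagonal x) (A * diagonal v) (B * diagonal y)
      = fromBlocks A 0 0 A *
        fromBlocks (diagonal u) (A⁻¹ * B * diagonal x) (diagonal v) (A⁻¹ * B * diagonal y) := by
    simp only [fromBlocks_multiply, Matrix.zero_mul, add_zero, zero_add, ← Matrix.mul_assoc,
      mul_nonsing_inv_cancel_left _ _ hA]
  rw [hfactor, det_mul, det_fromBlocks_zero₁₂, det_fromBlocks_diagonal_mul_diagonal, sq]
end

section
/- Let k₁,…,kₙ and l₁,…,lₙ be scalars with kᵢ ≠ kⱼ for i ≠ j and lⱼ ≠ kᵢ for all i,j. Let K(t) = ∏ₘ (t − kₘ). Then the Cauchy matrix (1/(lⱼ − kᵢ))₍ᵢⱼ₎ equals diag(K′(k₁),…,K′(kₙ)) · W(k)⁻¹ · W(l) · diag(K(l₁)⁻¹,…,K(lₙ)⁻¹), where W(k) is the Vandermonde matrix with (i,j) entry kⱼ^(i−1). -/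
open Matrix Polynomial

/- The columns of the Cauchy matrix rescaled by the nodal weights and by `K(lⱼ)` are the values
at `lⱼ` of the Lagrange basis polynomials of the nodes `kᵢ` (barycentric form). Since the
interpolant of `Xᵖ`, `p < n`, is `Xᵖ` itself, multiplying by `W(k)` on the left turns these
columns into the columns `(lⱼᵖ)ₚ` of `W(l)`. Inverting `W(k)` and the two diagonal scalings gives
the factorization, the nodal weights being `K′(kᵢ)⁻¹`. -/

namespace Lagrange

variable {F ι : Type*} [Field F] [DecidableEq ι]

theorem eval_eq_eval_nodal_mul_sum {s : Finset ι} {v : ι → F} {f : F[X]} {x : F}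
    (hvs : Set.InjOn v s) (hf : f.degree < s.card) (hx : ∀ i ∈ s, x ≠ v i) :
    f.eval x = (nodal s v).eval x * ∑ i ∈ s, nodalWeight s v i * (x - v i)⁻¹ * f.eval (v i) := by
  conv_lhs => rw [eq_interpolate hvs hf]
  exact eval_interpolate_not_at_node _ hx

end Lagrange

section

open Lagrange

variable {F : Type*} [Field F] {n : ℕ}

theorem vandermonde_transpose_mul_weighted_cauchy {k x : Fin n → F} (hk : Function.Injective k)
    (hx : ∀ i j, x j ≠ k i) :
    (vandermonde k)ᵀ
        * of (fun i j => nodalWeight Finset.univ k i * (x j - k i)⁻¹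
          * (nodal Finset.univ k).eval (x j))
      = (vandermonde x)ᵀ := by
  ext p j
  have hdeg : ((X : F[X]) ^ (p : ℕ)).degree < (Finset.univ : Finset (Fin n)).card := by
    rw [degree_X_pow, Finset.card_univ, Fintype.card_fin]
    exact_mod_cast p.isLt
  have hpow := eval_eq_eval_nodal_mul_sum hk.injOn hdeg fun i _ => hx i j
  simp only [eval_pow, eval_X] at hpow
  simp only [mul_apply, transpose_apply, vandermonde_apply, of_apply, hpow, Finset.mul_sum]
  exact Finset.sum_congr rfl fun i _ => by ring

theorem cauchy_eq_diagonal_mul_vandermonde_mul_diagonal {k x : Fin n → F}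
    (hk : Function.Injective k) (hx : ∀ i j, x j ≠ k i) :
    of (fun i j => (x j - k i)⁻¹)
      = diagonal (fun i => (nodalWeight Finset.univ k i)⁻¹) * (vandermonde k)ᵀ⁻¹
        * (vandermonde x)ᵀ * diagonal (fun j => ((nodal Finset.univ k).eval (x j))⁻¹) := by
  have hdet : IsUnit (vandermonde k)ᵀ.det := by
    rw [det_transpose, isUnit_iff_ne_zero]
    exact det_vandermonde_ne_zero_iff.mpr hk
  rw [Matrix.mul_assoc (diagonal _), ← vandermonde_transpose_mul_weighted_cauchy hk hx,
    nonsing_inv_mul_cancel_left (A := (vandermonde k)ᵀ) _ hdet]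
  ext i j
  have hw := nodalWeight_ne_zero hk.injOn (Finset.mem_univ i)
  have hK := eval_nodal_not_at_node (s := Finset.univ) (v := k) fun m _ => hx m j
  simp only [of_apply, mul_diagonal, diagonal_mul]
  field_simp

end

theorem cauchy_matrix_factorization {K : Type*} [Field K] {n : ℕ} (k l : Fin n → K)
    (hk : Function.Injective k) (hkl : ∀ i j, l j ≠ k i) :
    (Matrix.of fun i j : Fin n => (l j - k i)⁻¹)
      = Matrix.diagonal (fun i => (Polynomial.derivative (∏ m, (X - C (k m)))).eval (k i))
        * (Matrix.vandermonde k)ᵀ⁻¹ * (Matrix.vandermonde l)ᵀ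
        * Matrix.diagonal (fun j => ((∏ m, (X - C (k m))).eval (l j))⁻¹) := by
  simp_rw [← Lagrange.nodal_eq, cauchy_eq_diagonal_mul_vandermonde_mul_diagonal hk hkl,
    Lagrange.nodalWeight_eq_eval_derivative_nodal (Finset.mem_univ _), inv_inv]
end

section
/- For pairwise distinct real numbers κ₁,…,κₙ with κᵢ + κⱼ ≠ 0 for all i,j, and real x, the n×n determinant det(sinh((κᵢ+κⱼ)x)/(κᵢ+κⱼ)) equals W(cosh(κ₁x),…,cosh(κₙx)) · W(sinh(κ₁x),…,sinh(κₙx)) divided by (∏ᵢ κᵢ) · ∏_{i<j}(κᵢ+κⱼ)². -/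
/-!
With `a i = sinh (κ i * x)` and `b i = cosh (κ i * x)`, the addition formula turns the Gram
matrix into the Cauchy-like matrix `(a i * b j + a j * b i) / (κ i + κ j)`, and both Wronskians
at `x` have entries `κ j ^ i` times `a j` or `b j` according to the parity of `i`. The identity
`det G * (∏ κ i) * ∏_{i<j} (κ i + κ j)^2 = det V(a, b) * det V(b, a)` then holds for
arbitrary vectors `a`, `b`, by induction on `n`: the Schur complement of the `(0,0)` entry of `G` is a
matrix of the same shape in `n - 1` variables, built from the same two vectors that appear when
the first column of `V` is cleared by subtracting from each row a multiple of the row above.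
The pivot needs `a 0 * b 0 ≠ 0`; this restriction is removed by continuity in `(a 0, b 0)`.
-/

open Matrix

namespace Matrix

variable {R K : Type*} [CommRing R] [Field K] {n : ℕ}

theorem det_succ_eq_of_forall_succ_zero (M : Matrix (Fin (n + 1)) (Fin (n + 1)) R)
    (hM : ∀ i : Fin n, M i.succ 0 = 0) :
    M.det = M 0 0 * (M.submatrix Fin.succ Fin.succ).det := by
  rw [det_succ_column_zero, Fin.sum_univ_succ]
  simp [hM]

theorem det_succ_eq_mul_det_schur (M : Matrix (Fin (n + 1)) (Fin (n + 1)) K) (h : M 0 0 ≠ 0) :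
    M.det = M 0 0 *
      (of fun i j : Fin n => M i.succ j.succ - M i.succ 0 / M 0 0 * M 0 j.succ).det := by
  let c : Fin (n + 1) → K := Fin.cons 0 fun i => M i.succ 0 / M 0 0
  let B : Matrix (Fin (n + 1)) (Fin (n + 1)) K := of fun i j => M i j - c i * M 0 j
  have hB : M.det = B.det :=
    det_eq_of_forall_row_eq_smul_add_const c 0 rfl fun i j => by simp [B, c]
  rw [hB, det_succ_eq_of_forall_succ_zero B fun i => by simp [B, c, h]]
  congr 1
  simp [B, c]

end Matrix

section CauchyLike

variable {R K : Type*} [CommRing R] [Field K] {n : ℕ}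

def parityVandermonde (a b κ : Fin n → R) : Matrix (Fin n) (Fin n) R :=
  of fun i j => κ j ^ (i : ℕ) * if Even (i : ℕ) then a j else b j

def symCauchy (a b κ : Fin n → K) : Matrix (Fin n) (Fin n) K :=
  of fun i j => (a i * b j + a j * b i) / (κ i + κ j)

def cauchyDenom (κ : Fin n → K) : K :=
  (∏ i, κ i) * ∏ i, ∏ j ∈ Finset.Ioi i, (κ i + κ j) ^ 2

def parityReduce (κ a b : Fin (n + 1) → K) (j : Fin n) : K :=
  κ j.succ * a j.succ - κ 0 * (a 0 / b 0) * b j.succ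

theorem parityVandermonde_mul_diagonal (a b c κ : Fin n → R) :
    parityVandermonde (a * c) (b * c) κ = parityVandermonde a b κ * diagonal c := by
  ext i j
  simp only [parityVandermonde, mul_diagonal, of_apply, Pi.mul_apply]
  split_ifs <;> ring

theorem det_parityVandermonde_succ (κ a b : Fin (n + 1) → K) (ha : a 0 ≠ 0) (hb : b 0 ≠ 0) :
    (parityVandermonde b a κ).det = b 0 *
      (parityVandermonde (parityReduce κ a b) (parityReduce κ b a) (Fin.tail κ)).det := by
  set V := parityVandermonde b a κ
  -- `c r` is `κ 0` times the ratio of the first entries of rows `r + 1` and `r`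
  let c : Fin n → K := fun r => κ 0 * if Even (r : ℕ) then a 0 / b 0 else b 0 / a 0
  let B : Matrix (Fin (n + 1)) (Fin (n + 1)) K :=
    of (Fin.cons (V 0) fun r => V r.succ - c r • V r.castSucc)
  have hB : V.det = B.det :=
    det_eq_of_forall_row_eq_smul_add_pred c (fun j => rfl) fun r j => by simp [B]
  rw [hB, det_succ_eq_of_forall_succ_zero B fun r => ?_]
  · congr 1
    · simp [B, V, parityVandermonde]
    · congr 1
      ext r j
      simp only [B, V, c, parityVandermonde, parityReduce, submatrix_apply, of_apply,
        Fin.cons_succ, Pi.sub_apply, Pi.smul_apply, smul_eq_mul, Fin.val_succ, Fin.val_castSucc,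
        Nat.even_add_one, Fin.tail, pow_succ]
      split_ifs <;> ring
  · simp only [B, V, c, parityVandermonde, of_apply, Fin.cons_succ, Pi.sub_apply, Pi.smul_apply,
      smul_eq_mul, Fin.val_succ, Fin.val_castSucc, Nat.even_add_one, pow_succ]
    split_ifs <;> field_simp <;> ring

theorem det_symCauchy_succ (κ a b : Fin (n + 1) → K) (hκ : ∀ i j, κ i + κ j ≠ 0)
    (ha : a 0 ≠ 0) (hb : b 0 ≠ 0) :
    (symCauchy a b κ).det = a 0 * b 0 / κ 0 *
      (symCauchy (parityReduce κ a b * fun j => (κ 0 + κ j.succ)⁻¹)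
        (parityReduce κ b a * fun j => (κ 0 + κ j.succ)⁻¹) (Fin.tail κ)).det := by
  have h00 : κ 0 + κ 0 ≠ 0 := hκ 0 0
  have h0 : κ 0 ≠ 0 := by rintro h; simp [h] at h00
  have h2 : (2 : K) ≠ 0 := by rintro h; apply h00; rw [← two_mul, h, zero_mul]
  have hpivot : symCauchy a b κ 0 0 = a 0 * b 0 / κ 0 := by
    simp only [symCauchy, of_apply, ← two_mul]
    field_simp
  rw [det_succ_eq_mul_det_schur _ (by rw [hpivot]; exact div_ne_zero (mul_ne_zero ha hb) h0),
    hpivot]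
  congr 2
  ext i j
  have := hκ i.succ j.succ
  have := hκ 0 i.succ
  have := hκ 0 j.succ
  have := hκ i.succ 0
  simp only [symCauchy, parityReduce, of_apply, Pi.mul_apply, Fin.tail]
  field_simp
  ring

theorem cauchyDenom_succ (κ : Fin (n + 1) → K) :
    cauchyDenom κ = κ 0 * (∏ j : Fin n, (κ 0 + κ j.succ)) ^ 2 * cauchyDenom (Fin.tail κ) := by
  rw [cauchyDenom, cauchyDenom, Fin.prod_univ_succ, Fin.prod_univ_succ, Fin.prod_Ioi_zero,
    Finset.prod_pow]
  simp only [Fin.prod_Ioi_succ, Fin.tail]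
  ring

theorem cauchyDenom_ne_zero (κ : Fin n → K) (hκ : ∀ i j, κ i + κ j ≠ 0) : cauchyDenom κ ≠ 0 := by
  have h0 (i : Fin n) : κ i ≠ 0 := fun h => hκ i i (by rw [h, add_zero])
  exact mul_ne_zero (Finset.prod_ne_zero_iff.2 fun i _ => h0 i)
    (Finset.prod_ne_zero_iff.2 fun i _ => Finset.prod_ne_zero_iff.2 fun j _ =>
      pow_ne_zero _ (hκ i j))

theorem det_symCauchy_mul_cauchyDenom_succ (κ a b : Fin (n + 1) → K)
    (hκ : ∀ i j, κ i + κ j ≠ 0) (ha : a 0 ≠ 0) (hb : b 0 ≠ 0)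
    (ih : ∀ a b : Fin n → K, (symCauchy a b (Fin.tail κ)).det * cauchyDenom (Fin.tail κ) =
      (parityVandermonde a b (Fin.tail κ)).det * (parityVandermonde b a (Fin.tail κ)).det) :
    (symCauchy a b κ).det * cauchyDenom κ =
      (parityVandermonde a b κ).det * (parityVandermonde b a κ).det := by
  set w : Fin n → K := fun j => (κ 0 + κ j.succ)⁻¹
  set α := parityReduce κ a b
  set β := parityReduce κ b a
  have hw : ∏ j : Fin n, (κ 0 + κ j.succ) = (∏ j, w j)⁻¹ := by
    simp [w, Finset.prod_inv_distrib]
  have hw0 : ∏ j, w j ≠ 0 := Finset.prod_ne_zero_iff.2 fun j _ => inv_ne_zero (hκ 0 j.succ)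
  have h0 : κ 0 ≠ 0 := fun h => hκ 0 0 (by rw [h, add_zero])
  rw [det_symCauchy_succ κ a b hκ ha hb, cauchyDenom_succ, hw,
    det_parityVandermonde_succ κ a b ha hb, det_parityVandermonde_succ κ b a hb ha]
  calc a 0 * b 0 / κ 0 * (symCauchy (α * w) (β * w) (Fin.tail κ)).det
        * (κ 0 * ((∏ j, w j)⁻¹) ^ 2 * cauchyDenom (Fin.tail κ))
      = a 0 * b 0 * ((∏ j, w j)⁻¹) ^ 2 *
          ((symCauchy (α * w) (β * w) (Fin.tail κ)).det * cauchyDenom (Fin.tail κ)) := by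
        field_simp
    _ = a 0 * b 0 * ((∏ j, w j)⁻¹) ^ 2 *
          ((parityVandermonde α β (Fin.tail κ)).det * ∏ j, w j) *
          ((parityVandermonde β α (Fin.tail κ)).det * ∏ j, w j) := by
        rw [ih, parityVandermonde_mul_diagonal, parityVandermonde_mul_diagonal, det_mul,
          det_mul, det_diagonal]
        ring
    _ = a 0 * (parityVandermonde β α (Fin.tail κ)).det *
          (b 0 * (parityVandermonde α β (Fin.tail κ)).det) := by
        field_simp

theorem continuous_det_parityVandermonde [TopologicalSpace R] [IsTopologicalRing R]
    (κ : Fin n → R) :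
    Continuous fun p : (Fin n → R) × (Fin n → R) => (parityVandermonde p.1 p.2 κ).det := by
  refine Continuous.matrix_det (continuous_matrix fun i j => continuous_const.mul ?_)
  split_ifs <;> fun_prop

theorem continuous_det_symCauchy [TopologicalSpace K] [IsTopologicalRing K] (κ : Fin n → K) :
    Continuous fun p : (Fin n → K) × (Fin n → K) => (symCauchy p.1 p.2 κ).det :=
  Continuous.matrix_det <| continuous_matrix fun i j => by
    simp only [symCauchy, of_apply]
    fun_prop

theorem det_symCauchy_mul_cauchyDenom {K : Type*} [NontriviallyNormedField K] :
    ∀ {n : ℕ} (κ a b : Fin n → K), (∀ i j, κ i + κ j ≠ 0) →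
      (symCauchy a b κ).det * cauchyDenom κ =
        (parityVandermonde a b κ).det * (parityVandermonde b a κ).det
  | 0, _, _, _, _ => by simp [cauchyDenom]
  | n + 1, κ, a, b, hκ => by
    let u : K × K → (Fin (n + 1) → K) × (Fin (n + 1) → K) := fun p =>
      (Function.update a 0 p.1, Function.update b 0 p.2)
    have hu : Continuous u :=
      ((continuous_const (y := a)).update 0 continuous_fst).prodMk
        ((continuous_const (y := b)).update 0 continuous_snd)
    have key := Continuous.ext_on
      ((dense_compl_singleton (0 : K)).prod (dense_compl_singleton 0))
      (((continuous_det_symCauchy κ).comp hu).mul continuous_const)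
      (((continuous_det_parityVandermonde κ).comp hu).mul
        ((continuous_det_parityVandermonde κ).comp (continuous_swap.comp hu)))
      fun p ⟨hp1, hp2⟩ => det_symCauchy_mul_cauchyDenom_succ κ _ _ hκ
        (by simpa [u] using hp1) (by simpa [u] using hp2) fun a' b' =>
          det_symCauchy_mul_cauchyDenom (Fin.tail κ) a' b' fun i j => hκ i.succ j.succ
    simpa [u] using congrFun key (a 0, b 0)

end CauchyLike

theorem iteratedDeriv_sinh_const_mul (k x : ℝ) (m : ℕ) :
    iteratedDeriv m (fun t => Real.sinh (k * t)) x =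
      k ^ m * if Even m then Real.sinh (k * x) else Real.cosh (k * x) := by
  rw [iteratedDeriv_comp_const_mul Real.contDiff_sinh]
  obtain ⟨m, rfl | rfl⟩ := Nat.even_or_odd' m <;> simp

theorem iteratedDeriv_cosh_const_mul (k x : ℝ) (m : ℕ) :
    iteratedDeriv m (fun t => Real.cosh (k * t)) x =
      k ^ m * if Even m then Real.cosh (k * x) else Real.sinh (k * x) := by
  rw [iteratedDeriv_comp_const_mul Real.contDiff_cosh]
  obtain ⟨m, rfl | rfl⟩ := Nat.even_or_odd' m <;> simp

theorem sinh_gramian_wronskian_general {n : ℕ} (κ : Fin n → ℝ)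
    (hsum : ∀ i j, κ i + κ j ≠ 0) (x : ℝ) :
    (Matrix.of fun i j : Fin n => Real.sinh ((κ i + κ j) * x) / (κ i + κ j)).det
      = (Matrix.of fun i j : Fin n =>
          iteratedDeriv (i : ℕ) (fun t => Real.cosh (κ j * t)) x).det
        * (Matrix.of fun i j : Fin n =>
          iteratedDeriv (i : ℕ) (fun t => Real.sinh (κ j * t)) x).det
        / ((∏ i, κ i) * ∏ i, ∏ j ∈ Finset.Ioi i, (κ i + κ j) ^ 2) := by
  set s : Fin n → ℝ := fun i => Real.sinh (κ i * x)
  set c : Fin n → ℝ := fun i => Real.cosh (κ i * x)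
  have hG : (of fun i j : Fin n => Real.sinh ((κ i + κ j) * x) / (κ i + κ j)) =
      symCauchy s c κ := by
    ext i j
    simp only [symCauchy, of_apply, s, c, add_mul, Real.sinh_add]
    ring
  have hC : (of fun i j : Fin n => iteratedDeriv (i : ℕ) (fun t => Real.cosh (κ j * t)) x) =
      parityVandermonde c s κ := by
    ext i j
    simp only [parityVandermonde, of_apply, iteratedDeriv_cosh_const_mul, s, c]
  have hS : (of fun i j : Fin n => iteratedDeriv (i : ℕ) (fun t => Real.sinh (κ j * t)) x) =
      parityVandermonde s c κ := by
    ext i j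
    simp only [parityVandermonde, of_apply, iteratedDeriv_sinh_const_mul, s, c]
  rw [hG, hC, hS, ← cauchyDenom, eq_div_iff (cauchyDenom_ne_zero κ hsum),
    det_symCauchy_mul_cauchyDenom κ s c hsum, mul_comm]

theorem sinh_gramian_wronskian {n : ℕ} (κ : Fin n → ℝ) (hκ : Function.Injective κ)
    (hsum : ∀ i j, κ i + κ j ≠ 0) (x : ℝ) :
    (Matrix.of fun i j : Fin n => Real.sinh ((κ i + κ j) * x) / (κ i + κ j)).det
      = (Matrix.of fun i j : Fin n =>
          iteratedDeriv (i : ℕ) (fun t => Real.cosh (κ j * t)) x).det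
        * (Matrix.of fun i j : Fin n =>
          iteratedDeriv (i : ℕ) (fun t => Real.sinh (κ j * t)) x).det
        / ((∏ i, κ i) * ∏ i, ∏ j ∈ Finset.Ioi i, (κ i + κ j) ^ 2) :=
  sinh_gramian_wronskian_general κ hsum x
end

section
/- Let μ be a differentiable function on an interval, κ ∈ ℂ, and let (α, β) be a pair of differentiable functions with α, β nonvanishing satisfying α′ − μα = κβ and β′ + μβ = κα. If (a, b) satisfies a′ − μa = −kb and b′ + μb = ka, then a₁ := a′ − (α′/α)a and b₁ := b′ − (β′/β)b satisfy a₁′ − μ₁a₁ = −kb₁ and b₁′ + μ₁b₁ = ka₁, where μ₁ = μ − (d/dx) log(α/β) = μ − α′/α + β′/β. -/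
/-- Simultaneous Darboux transformations of a Krein system. -/
theorem simultaneous_darboux (μ α β a b : ℝ → ℂ) (k κ : ℂ)
    (hμ : ContDiff ℝ (⊤ : ℕ∞) μ) (hα : ContDiff ℝ (⊤ : ℕ∞) α) (hβ : ContDiff ℝ (⊤ : ℕ∞) β)
    (ha : ContDiff ℝ (⊤ : ℕ∞) a) (hb : ContDiff ℝ (⊤ : ℕ∞) b)
    (hα0 : ∀ x, α x ≠ 0) (hβ0 : ∀ x, β x ≠ 0)
    (hT1 : ∀ x, deriv α x - μ x * α x = κ * β x)
    (hT2 : ∀ x, deriv β x + μ x * β x = κ * α x)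
    (hS1 : ∀ x, deriv a x - μ x * a x = -k * b x)
    (hS2 : ∀ x, deriv b x + μ x * b x = k * a x) :
    ∀ x,
      deriv (fun y => deriv a y - (deriv α y / α y) * a y) x
          - (μ x - deriv α x / α x + deriv β x / β x)
            * (deriv a x - (deriv α x / α x) * a x)
        = -k * (deriv b x - (deriv β x / β x) * b x)
      ∧ deriv (fun y => deriv b y - (deriv β y / β y) * b y) x
          + (μ x - deriv α x / α x + deriv β x / β x)
            * (deriv b x - (deriv β x / β x) * b x)
        = k * (deriv a x - (deriv α x / α x) * a x) := by
  have hμd : Differentiable ℝ μ := hμ.differentiable (by simp)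
  have hαd : Differentiable ℝ α := hα.differentiable (by simp)
  have hβd : Differentiable ℝ β := hβ.differentiable (by simp)
  have had : Differentiable ℝ a := ha.differentiable (by simp)
  have hbd : Differentiable ℝ b := hb.differentiable (by simp)
  have hea : ∀ y, deriv a y = μ y * a y - k * b y := fun y => by
    linear_combination hS1 y
  have heb : ∀ y, deriv b y = k * a y - μ y * b y := fun y => by
    linear_combination hS2 y
  have heα : ∀ y, deriv α y = μ y * α y + κ * β y := fun y => by
    linear_combination hT1 y
  have heβ : ∀ y, deriv β y = κ * α y - μ y * β y := fun y => by
    linear_combination hT2 y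
  have h1 : (fun y => deriv a y - (deriv α y / α y) * a y)
      = fun y => -k * b y - κ * (β y * a y / α y) := funext fun y => by
    rw [hea, heα]; field_simp [hα0 y]; ring
  have h2 : (fun y => deriv b y - (deriv β y / β y) * b y)
      = fun y => k * a y - κ * (α y * b y / β y) := funext fun y => by
    rw [heb, heβ]; field_simp [hβ0 y]; ring
  intro x
  have dβa : DifferentiableAt ℝ (fun y => β y * a y) x := (hβd x).mul (had x)
  have dαb : DifferentiableAt ℝ (fun y => α y * b y) x := (hαd x).mul (hbd x)
  have d1 : deriv (fun y => -k * b y - κ * (β y * a y / α y)) x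
      = -k * deriv b x
        - κ * ((deriv β x * a x + β x * deriv a x) * α x
            - β x * a x * deriv α x) / (α x * α x) := by
    rw [deriv_fun_sub ((hbd x).const_mul _)
        (((dβa.fun_div (hαd x) (hα0 x))).const_mul _),
      deriv_const_mul _ (hbd x),
      deriv_const_mul _ (dβa.fun_div (hαd x) (hα0 x)),
      deriv_fun_div dβa (hαd x) (hα0 x),
      deriv_fun_mul (hβd x) (had x)]
    ring
  have d2 : deriv (fun y => k * a y - κ * (α y * b y / β y)) x
      = k * deriv a x
        - κ * ((deriv α x * b x + α x * deriv b x) * β x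
            - α x * b x * deriv β x) / (β x * β x) := by
    rw [deriv_fun_sub ((had x).const_mul _)
        (((dαb.fun_div (hβd x) (hβ0 x))).const_mul _),
      deriv_const_mul _ (had x),
      deriv_const_mul _ (dαb.fun_div (hβd x) (hβ0 x)),
      deriv_fun_div dαb (hβd x) (hβ0 x),
      deriv_fun_mul (hαd x) (hbd x)]
    ring
  constructor
  · rw [h1, d1, hea, heb, heα, heβ]
    field_simp [hα0 x, hβ0 x]
    ring
  · rw [h2, d2, hea, heb, heα, heβ]
    field_simp [hα0 x, hβ0 x]
    ring
end

section
/- With the hypotheses of the simultaneous Darboux transformation (α′ − μα = κβ, β′ + μβ = κα, α and β nonvanishing), if τ is a positive twice-differentiable function with μ² = −(log τ)″, then μ₁ := μ − (α′/α − β′/β) satisfies μ₁² = −(log τ₁)″ where τ₁ = ταβ. -/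
theorem darboux_tau_transform (μ α β τ : ℝ → ℝ) (κ : ℝ)
    (hμ : ContDiff ℝ (⊤ : ℕ∞) μ) (hα : ContDiff ℝ (⊤ : ℕ∞) α) (hβ : ContDiff ℝ (⊤ : ℕ∞) β)
    (hτc : ContDiff ℝ (⊤ : ℕ∞) τ)
    (hα0 : ∀ x, α x ≠ 0) (hβ0 : ∀ x, β x ≠ 0) (hτ0 : ∀ x, 0 < τ x)
    (hT1 : ∀ x, deriv α x - μ x * α x = κ * β x)
    (hT2 : ∀ x, deriv β x + μ x * β x = κ * α x)
    (htau : ∀ x, deriv (fun y => deriv τ y / τ y) x = -(μ x) ^ 2) :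
    ∀ x, deriv (fun y => deriv (fun z => τ z * α z * β z) y / (τ y * α y * β y)) x
      = -(μ x - (deriv α x / α x - deriv β x / β x)) ^ 2 := by
  intro x
  have hτ0' : ∀ y, τ y ≠ 0 := fun y => (hτ0 y).ne'
  have dα : Differentiable ℝ α := hα.differentiable (by simp)
  have dβ : Differentiable ℝ β := hβ.differentiable (by simp)
  have dτ : Differentiable ℝ τ := hτc.differentiable (by simp)
  have dμ : Differentiable ℝ μ := hμ.differentiable (by simp)
  have dτ' : Differentiable ℝ (deriv τ) :=
    ((contDiff_infty_iff_deriv.mp (hτc.of_le (mod_cast le_top))).2).differentiable (by simp)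
  have hα' : ∀ y, deriv α y = μ y * α y + κ * β y := fun y => by
    have := hT1 y; linarith
  have hβ' : ∀ y, deriv β y = -(μ y * β y) + κ * α y := fun y => by
    have := hT2 y; linarith
  -- Step 1: the log-derivative of ταβ splits into a sum
  have hsplit : (fun y => deriv (fun z => τ z * α z * β z) y / (τ y * α y * β y))
      = fun y => deriv τ y / τ y + (μ y + κ * (β y / α y)) + (-(μ y) + κ * (α y / β y)) := by
    funext y
    have h1 : deriv (fun z => τ z * α z * β z) y
        = (deriv τ y * α y + τ y * deriv α y) * β y + (τ y * α y) * deriv β y := by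
      rw [deriv_fun_mul (c := fun z => τ z * α z) ((dτ y).mul (dα y)) (dβ y), deriv_fun_mul (dτ y) (dα y)]
    rw [h1, hα' y, hβ' y]
    field_simp [hα0 y, hβ0 y, hτ0' y]
  rw [hsplit]
  -- Step 2: differentiate the sum
  have dquot1 : Differentiable ℝ (fun y => deriv τ y / τ y) :=
    dτ'.div dτ hτ0'
  have dquot2 : Differentiable ℝ (fun y => μ y + κ * (β y / α y)) :=
    dμ.add ((dβ.div dα hα0).const_mul κ)
  have dquot3 : Differentiable ℝ (fun y => -(μ y) + κ * (α y / β y)) :=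
    dμ.neg.add ((dα.div dβ hβ0).const_mul κ)
  rw [deriv_fun_add (f := fun y => deriv τ y / τ y + (μ y + κ * (β y / α y))) ((dquot1 x).add (dquot2 x)) (dquot3 x),
      deriv_fun_add (dquot1 x) (dquot2 x)]
  have e1 : deriv (fun y => deriv τ y / τ y) x = -(μ x) ^ 2 := htau x
  have e2 : deriv (fun y => μ y + κ * (β y / α y)) x
      = deriv μ x + κ * ((deriv β x * α x - β x * deriv α x) / (α x)^2) := by
    rw [deriv_fun_add (g := fun y => κ * (β y / α y)) (dμ x) (((dβ.div dα hα0) x).const_mul κ),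
        deriv_const_mul κ (d := fun y => β y / α y) ((dβ.div dα hα0) x),
        deriv_fun_div (dβ x) (dα x) (hα0 x)]
  have e3 : deriv (fun y => -(μ y) + κ * (α y / β y)) x
      = -deriv μ x + κ * ((deriv α x * β x - α x * deriv β x) / (β x)^2) := by
    rw [deriv_fun_add (f := fun y => -(μ y)) (g := fun y => κ * (α y / β y)) ((dμ x).neg) (((dα.div dβ hβ0) x).const_mul κ),
        deriv.fun_neg, deriv_const_mul κ (d := fun y => α y / β y) ((dα.div dβ hβ0) x),
        deriv_fun_div (dα x) (dβ x) (hβ0 x)]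
  rw [e1, e2, e3, hα' x, hβ' x]
  field_simp [hα0 x, hβ0 x]
  ring
end

section
/- Suppose E(t) and F(t) (functions of x, for each fixed real t) satisfy (d/dx)E = tE + μ(x)F and (d/dx)F = −tF + μ(x)E, and suppose E(t) = e^{xt} + Σⱼ cⱼ(x)·2 sinh((t−κⱼ)x)/(t−κⱼ) identically in t, with κ₁,…,κₙ distinct reals. Then μ(x) = (−1)ⁿ Σⱼ 2cⱼ(x)e^{κⱼx} and for each j, cⱼ′(x) − κⱼcⱼ(x) = μ(x)dⱼ(x), where the dⱼ are defined by F(t) = (−1)ⁿe^{−xt} + Σⱼ dⱼ(x)·2 sinh((t−κⱼ)x)/(t−κⱼ). -/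
/-- `sinh((t-κ)x)/(t-κ)`, interpreted as `x` when `t = κ`. -/
noncomputable def sinhc (x t κ : ℝ) : ℝ :=
  if t = κ then x else Real.sinh ((t - κ) * x) / (t - κ)

/-!
Differentiating the expansion of `E` in `x` and using
`cosh ((t - κ) x) = (t - κ) sinhc + e^{κx} e^{-xt}` writes `(d/dx - t) E` as a combination of
`e^{-xt}` and the functions `2 sinhc x t κⱼ`; it equals `μ F`, which has the same shape, so the
coefficients of the difference vanish. These functions of `t` are linearly independent for
`x > 0`: multiplying a vanishing combination by `e^{xt} ∏ᵢ (t - κᵢ)` gives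
`P(t) + e^{2xt} Q(t) = 0` for polynomials `P`, `Q`, so `Q = 0` by comparing growth, and
evaluating `Q` at the nodes `κₖ` kills the `sinhc` coefficients.
-/

open Real Filter Topology Finset Polynomial Lagrange

lemma sub_mul_sinhc (x t κ : ℝ) : (t - κ) * sinhc x t κ = sinh ((t - κ) * x) := by
  by_cases h : t = κ
  · simp [h]
  · rw [sinhc, if_neg h, mul_div_cancel₀ _ (sub_ne_zero.2 h)]

lemma hasDerivAt_sinhc (t κ x : ℝ) :
    HasDerivAt (fun y => sinhc y t κ) (cosh ((t - κ) * x)) x := by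
  by_cases h : t = κ
  · simpa [sinhc, h] using hasDerivAt_id' x
  · have hsinh := ((hasDerivAt_id' x).const_mul (t - κ)).sinh.div_const (t - κ)
    simp only [sinhc, if_neg h, mul_one] at hsinh ⊢
    rwa [mul_div_cancel_right₀ _ (sub_ne_zero.2 h)] at hsinh

lemma cosh_eq_sub_mul_sinhc_add (x t κ : ℝ) :
    cosh ((t - κ) * x) = (t - κ) * sinhc x t κ + exp (κ * x) * exp (-(x * t)) := by
  have hexp : exp (κ * x) * exp (-(x * t)) = exp (-((t - κ) * x)) := by
    rw [← exp_add]; ring_nf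
  rw [sub_mul_sinhc, hexp, ← cosh_sub_sinh]
  ring

lemma exp_mul_sub_mul_sinhc (x t κ : ℝ) :
    exp (x * t) * ((t - κ) * (2 * sinhc x t κ))
      = exp (2 * x * t) * exp (-(κ * x)) - exp (κ * x) := by
  rw [mul_left_comm (t - κ), sub_mul_sinhc, sinh_eq, mul_div_cancel₀ _ two_ne_zero, mul_sub,
    ← exp_add, ← exp_add, ← exp_add]
  ring_nf

lemma Polynomial.eq_zero_of_eval_add_exp_mul_eval_eq_zero {c : ℝ} (hc : 0 < c) {P Q : ℝ[X]}
    (h : ∀ t, P.eval t + exp (c * t) * Q.eval t = 0) : Q = 0 := by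
  set R := P.comp (C c⁻¹ * X)
  have hQ : ∀ t, Q.eval t = -(R.eval (c * t) / exp (c * t)) := by
    intro t
    simp only [R, eval_comp, eval_mul, eval_C, eval_X, inv_mul_cancel_left₀ hc.ne']
    field_simp
    linear_combination h t
  have hlim : Tendsto (fun t => Q.eval t) atTop (𝓝 0) := by
    simpa [hQ] using (R.tendsto_div_exp_atTop.comp (tendsto_id.const_mul_atTop hc)).neg
  exact leadingCoeff_eq_zero.1 ((tendsto_nhds_iff Q).1 hlim).1

lemma Lagrange.eq_zero_of_sum_C_mul_nodal_erase_eq_zero {R ι : Type*} [CommRing R] [IsDomain R]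
    [DecidableEq ι]
    {s : Finset ι} {v : ι → R} (hv : Set.InjOn v s) {β : ι → R}
    (h : ∑ j ∈ s, C (β j) * nodal (s.erase j) v = 0) {k : ι} (hk : k ∈ s) : β k = 0 := by
  have heval := congrArg (Polynomial.eval (v k)) h
  rw [eval_finsetSum, sum_eq_single k, eval_mul, eval_C, eval_zero] at heval
  · refine (mul_eq_zero.1 heval).resolve_right (eval_nodal_not_at_node fun i hi hki => ?_)
    exact (mem_erase.1 hi).1 (hv (mem_erase.1 hi).2 hk hki.symm)
  · intro j _ hjk
    rw [eval_mul, eval_nodal_at_node (mem_erase.2 ⟨Ne.symm hjk, hk⟩), mul_zero]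
  · exact fun hk' => absurd hk hk'

theorem eq_zero_of_exp_add_sum_sinhc_eq_zero {ι : Type*} [Fintype ι] {x : ℝ} (hx : 0 < x)
    {κ : ι → ℝ} (hκ : Function.Injective κ) {a : ℝ} {b : ι → ℝ}
    (h : ∀ t, a * exp (-(x * t)) + ∑ j, b j * (2 * sinhc x t (κ j)) = 0) :
    a = 0 ∧ ∀ j, b j = 0 := by
  classical
  set P := C a * nodal univ κ - ∑ j, C (b j * exp (κ j * x)) * nodal (univ.erase j) κ
  set Q := ∑ j, C (b j * exp (-(κ j * x))) * nodal (univ.erase j) κ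
  have hPQ : ∀ t, P.eval t + exp (2 * x * t) * Q.eval t = 0 := by
    intro t
    have hterm : ∀ j, b j * (2 * sinhc x t (κ j)) * (exp (x * t) * (nodal univ κ).eval t)
        = exp (2 * x * t) * (b j * exp (-(κ j * x)) * (nodal (univ.erase j) κ).eval t)
          - b j * exp (κ j * x) * (nodal (univ.erase j) κ).eval t := by
      intro j
      rw [nodal_eq_mul_nodal_erase (mem_univ j), eval_mul, eval_sub, eval_X, eval_C]
      linear_combination b j * (nodal (univ.erase j) κ).eval t * exp_mul_sub_mul_sinhc x t (κ j)
    have hexp : exp (-(x * t)) * exp (x * t) = 1 := by rw [← exp_add]; simp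
    have h' := congrArg (· * (exp (x * t) * (nodal univ κ).eval t)) (h t)
    simp only [add_mul, sum_mul, hterm, sum_sub_distrib, zero_mul] at h'
    simp only [P, Q, eval_sub, eval_mul, eval_C, eval_finsetSum, mul_sum]
    linear_combination h' - a * (nodal univ κ).eval t * hexp
  have hb : ∀ j, b j = 0 := fun j => by
    simpa [exp_ne_zero] using eq_zero_of_sum_C_mul_nodal_erase_eq_zero hκ.injOn
      (eq_zero_of_eval_add_exp_mul_eval_eq_zero (by positivity) hPQ) (mem_univ j)
  exact ⟨by simpa [hb] using h 0, hb⟩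

lemma hasDerivAt_exp_add_sum_sinhc {ι : Type*} [Fintype ι] (κ : ι → ℝ) {c : ι → ℝ → ℝ}
    {x : ℝ} (hc : ∀ j, DifferentiableAt ℝ (c j) x) (t : ℝ) :
    HasDerivAt (fun y => exp (y * t) + ∑ j, c j y * (2 * sinhc y t (κ j)))
      (t * (exp (x * t) + ∑ j, c j x * (2 * sinhc x t (κ j)))
        + ((∑ j, 2 * c j x * exp (κ j * x)) * exp (-(x * t))
          + ∑ j, (deriv (c j) x - κ j * c j x) * (2 * sinhc x t (κ j)))) x := by
  refine (((hasDerivAt_id' x).mul_const t).exp.fun_add <| HasDerivAt.fun_sum (u := univ)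
    fun j _ => (hc j).hasDerivAt.fun_mul ((hasDerivAt_sinhc t (κ j) x).const_mul 2)).congr_deriv ?_
  calc _ = t * exp (x * t) + ∑ j, (t * (c j x * (2 * sinhc x t (κ j)))
        + (2 * c j x * exp (κ j * x) * exp (-(x * t))
          + (deriv (c j) x - κ j * c j x) * (2 * sinhc x t (κ j)))) := by
        rw [one_mul, mul_comm]
        congr 1
        refine sum_congr rfl fun j _ => ?_
        rw [cosh_eq_sub_mul_sinhc_add]
        ring
    _ = _ := by
        simp only [mul_add, mul_sum, sum_add_distrib, sum_mul]
        ring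

theorem mu_formula_and_c_ode_general {n : ℕ} (κ : Fin n → ℝ) (hκ : Function.Injective κ)
    (E F : ℝ → ℝ → ℝ) (c d : Fin n → ℝ → ℝ) (μ : ℝ → ℝ)
    (hc : ∀ j, Differentiable ℝ (c j))
    (hE : ∀ x t, deriv (fun y => E y t) x = t * E x t + μ x * F x t)
    (hEexp : ∀ x t, E x t = Real.exp (x * t) + ∑ j, c j x * (2 * sinhc x t (κ j)))
    (hFexp : ∀ x t, F x t = (-1 : ℝ) ^ n * Real.exp (-(x * t))
        + ∑ j, d j x * (2 * sinhc x t (κ j))) :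
    ∀ x : ℝ, 0 < x →
      μ x = (-1 : ℝ) ^ n * ∑ j, 2 * c j x * Real.exp (κ j * x)
      ∧ ∀ j, deriv (c j) x - κ j * c j x = μ x * d j x := by
  intro x hx
  have hresidual : ∀ t, ((∑ j, 2 * c j x * exp (κ j * x)) - (-1) ^ n * μ x) * exp (-(x * t))
      + ∑ j, (deriv (c j) x - κ j * c j x - μ x * d j x) * (2 * sinhc x t (κ j)) = 0 := by
    intro t
    have hderiv := (hasDerivAt_exp_add_sum_sinhc κ (fun j => hc j x) t).deriv
    rw [← funext fun y => hEexp y t, hE, hFexp, ← hEexp] at hderiv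
    simp only [sub_mul _ (μ x * _), sum_sub_distrib, mul_assoc (μ x), ← mul_sum]
    linear_combination -hderiv
  obtain ⟨hμ, hcd⟩ := eq_zero_of_exp_add_sum_sinhc_eq_zero hx hκ hresidual
  have hsign : (-1 : ℝ) ^ n * (-1) ^ n = 1 := by rw [← mul_pow]; norm_num
  exact ⟨by linear_combination -(-1 : ℝ) ^ n * hμ - μ x * hsign, fun j => sub_eq_zero.1 (hcd j)⟩

theorem mu_formula_and_c_ode {n : ℕ} (κ : Fin n → ℝ) (hκ : Function.Injective κ)
    (E F : ℝ → ℝ → ℝ) (c d : Fin n → ℝ → ℝ) (μ : ℝ → ℝ)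
    (hc : ∀ j, Differentiable ℝ (c j)) (hd : ∀ j, Differentiable ℝ (d j))
    (hE : ∀ x t, deriv (fun y => E y t) x = t * E x t + μ x * F x t)
    (hF : ∀ x t, deriv (fun y => F y t) x = -t * F x t + μ x * E x t)
    (hEexp : ∀ x t, E x t = Real.exp (x * t) + ∑ j, c j x * (2 * sinhc x t (κ j)))
    (hFexp : ∀ x t, F x t = (-1 : ℝ) ^ n * Real.exp (-(x * t))
        + ∑ j, d j x * (2 * sinhc x t (κ j))) :
    ∀ x : ℝ, 0 < x →
      μ x = (-1 : ℝ) ^ n * ∑ j, 2 * c j x * Real.exp (κ j * x)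
      ∧ ∀ j, deriv (c j) x - κ j * c j x = μ x * d j x :=
  mu_formula_and_c_ode_general κ hκ E F c d μ hc hE hEexp hFexp
end

section
/- Let X, Y be differentiable functions of a satisfying the system (VI_{ν,n}): aX′ = νX − (1−X²)μ_{ν+1} and aY′ = −(ν+1)Y + (1−Y²)μ_ν, where μ_ν = (2na/(1−a²))(X+aY)/(1+aXY) and μ_{ν+1} = (2na/(1−a²))(aX+Y)/(1+aXY). Set b = a², q = a(aX+Y)/(X+aY), T = 1/(1+aXY). Then dq/db = (2n + ν + (ν+1)b)/(b(b−1)) · q − ((ν+n)q² + (ν+1+n)b)/(b(b−1)) + 2nqT/b. -/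
/-- `q = a(aX+Y)/(X+aY)`. -/
noncomputable def qfun (X Y : ℝ → ℝ) : ℝ → ℝ := fun a => a * (a * X a + Y a) / (X a + a * Y a)

/-- `T = 1/(1+aXY)`. -/
noncomputable def Tfun (X Y : ℝ → ℝ) : ℝ → ℝ := fun a => (1 + a * X a * Y a)⁻¹

theorem hasDerivAt_qfun {X Y : ℝ → ℝ} {X' Y' a : ℝ} (hX : HasDerivAt X X' a)
    (hY : HasDerivAt Y Y' a) (hden : X a + a * Y a ≠ 0) :
    HasDerivAt (qfun X Y)
      ((X a * (2 * a * X a + (1 + a ^ 2) * Y a) + a * (1 - a ^ 2) * (X a * Y' - X' * Y a))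
        / (X a + a * Y a) ^ 2) a := by
  have h : HasDerivAt (fun t => t * (t * X t + Y t) / (X t + t * Y t)) _ a :=
    ((hasDerivAt_id' a).mul (((hasDerivAt_id' a).mul hX).add hY)).div
      (hX.add ((hasDerivAt_id' a).mul hY)) hden
  exact h.congr_deriv (by simp only [Pi.mul_apply, Pi.add_apply]; ring)

/- The derivative of `q` involves `X'` and `Y'` only through `X (a Y') - Y (a X')`, which the system
expresses without derivatives. -/
theorem q_riccati_of_system {ν n a x y x' y' q T : ℝ} (ha : a ≠ 0) (ha1 : 1 - a ^ 2 ≠ 0)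
    (hxy : 1 + a * x * y ≠ 0) (hden : x + a * y ≠ 0)
    (hx : a * x' = ν * x - (1 - x ^ 2) * (2 * n * a / (1 - a ^ 2)) * (a * x + y) / (1 + a * x * y))
    (hy : a * y' = -(ν + 1) * y + (1 - y ^ 2) * (2 * n * a / (1 - a ^ 2)) * (x + a * y)
      / (1 + a * x * y))
    (hq : q = a * (a * x + y) / (x + a * y)) (hT : T = (1 + a * x * y)⁻¹) :
    (1 / (2 * a)) * ((x * (2 * a * x + (1 + a ^ 2) * y) + a * (1 - a ^ 2) * (x * y' - x' * y))
        / (x + a * y) ^ 2)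
      = (2 * n + ν + (ν + 1) * a ^ 2) / (a ^ 2 * (a ^ 2 - 1)) * q
        - ((ν + n) * q ^ 2 + (ν + 1 + n) * a ^ 2) / (a ^ 2 * (a ^ 2 - 1))
        + 2 * n * q * T / a ^ 2 := by
  have ha1' : a ^ 2 - 1 ≠ 0 := fun h => ha1 (by linear_combination -h)
  rw [show a * (1 - a ^ 2) * (x * y' - x' * y) = (1 - a ^ 2) * (x * (a * y') - y * (a * x')) by ring,
    hx, hy, hq, hT]
  field_simp
  ring

theorem q_derivative_equation_general (ν : ℝ) (n : ℕ) (X Y : ℝ → ℝ) (U : Set ℝ)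
    (hUsub : U ⊆ Set.Ioo (0 : ℝ) 1)
    (hX : ∀ a ∈ U, DifferentiableAt ℝ X a) (hY : ∀ a ∈ U, DifferentiableAt ℝ Y a)
    (hden : ∀ a ∈ U, 1 + a * X a * Y a ≠ 0)
    (hden' : ∀ a ∈ U, X a + a * Y a ≠ 0)
    (heqX : ∀ a ∈ U, a * deriv X a
        = ν * X a - (1 - X a ^ 2) * (2 * (n : ℝ) * a / (1 - a ^ 2))
            * (a * X a + Y a) / (1 + a * X a * Y a))
    (heqY : ∀ a ∈ U, a * deriv Y a
        = -(ν + 1) * Y a + (1 - Y a ^ 2) * (2 * (n : ℝ) * a / (1 - a ^ 2))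
            * (X a + a * Y a) / (1 + a * X a * Y a)) :
    ∀ a ∈ U, (1 / (2 * a)) * deriv (qfun X Y) a
      = (2 * (n : ℝ) + ν + (ν + 1) * a ^ 2) / (a ^ 2 * (a ^ 2 - 1)) * qfun X Y a
        - ((ν + (n : ℝ)) * (qfun X Y a) ^ 2 + (ν + 1 + (n : ℝ)) * a ^ 2)
            / (a ^ 2 * (a ^ 2 - 1))
        + 2 * (n : ℝ) * qfun X Y a * Tfun X Y a / a ^ 2 := by
  intro a ha
  obtain ⟨ha0, ha1⟩ := hUsub ha
  rw [(hasDerivAt_qfun (hX a ha).hasDerivAt (hY a ha).hasDerivAt (hden' a ha)).deriv]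
  exact q_riccati_of_system ha0.ne' (by nlinarith) (hden a ha) (hden' a ha) (heqX a ha) (heqY a ha)
    rfl rfl

theorem q_derivative_equation (ν : ℝ) (n : ℕ) (hn : 0 < n) (X Y : ℝ → ℝ) (U : Set ℝ)
    (hUopen : IsOpen U) (hUsub : U ⊆ Set.Ioo (0 : ℝ) 1)
    (hX : ∀ a ∈ U, DifferentiableAt ℝ X a) (hY : ∀ a ∈ U, DifferentiableAt ℝ Y a)
    (hden : ∀ a ∈ U, 1 + a * X a * Y a ≠ 0)
    (hden' : ∀ a ∈ U, X a + a * Y a ≠ 0)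
    (heqX : ∀ a ∈ U, a * deriv X a
        = ν * X a - (1 - X a ^ 2) * (2 * (n : ℝ) * a / (1 - a ^ 2))
            * (a * X a + Y a) / (1 + a * X a * Y a))
    (heqY : ∀ a ∈ U, a * deriv Y a
        = -(ν + 1) * Y a + (1 - Y a ^ 2) * (2 * (n : ℝ) * a / (1 - a ^ 2))
            * (X a + a * Y a) / (1 + a * X a * Y a)) :
    ∀ a ∈ U, (1 / (2 * a)) * deriv (qfun X Y) a
      = (2 * (n : ℝ) + ν + (ν + 1) * a ^ 2) / (a ^ 2 * (a ^ 2 - 1)) * qfun X Y a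
        - ((ν + (n : ℝ)) * (qfun X Y a) ^ 2 + (ν + 1 + (n : ℝ)) * a ^ 2)
            / (a ^ 2 * (a ^ 2 - 1))
        + 2 * (n : ℝ) * qfun X Y a * Tfun X Y a / a ^ 2 :=
  q_derivative_equation_general ν n X Y U hUsub hX hY hden hden' heqX heqY
end

section
/- Let X, Y satisfy the system (VI_{ν,n}): aX′ = νX − (1−X²)μ_{ν+1}, aY′ = −(ν+1)Y + (1−Y²)μ_ν with μ_ν = (2na/(1−a²))(X+aY)/(1+aXY), μ_{ν+1} = (2na/(1−a²))(aX+Y)/(1+aXY). Set b = a², T = 1/(1+aXY), q = a(aX+Y)/(X+aY). Then dT/db = T(T−1)·n(q² − b)/(b(q−b)(q−1)). -/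
theorem mul_add_mul_deriv_eq_of_painleveVI {K : Type*} [Field K] (ν μ a x y dx dy : K)
    (hdx : a * dx = ν * x - (1 - x ^ 2) * μ * (a * x + y) / (1 + a * x * y))
    (hdy : a * dy = -(ν + 1) * y + (1 - y ^ 2) * μ * (x + a * y) / (1 + a * x * y))
    (hD : 1 + a * x * y ≠ 0) :
    x * y + a * (dx * y + x * dy) = μ * (x ^ 2 - y ^ 2) := by
  linear_combination y * hdx + x * hdy + μ * (x ^ 2 - y ^ 2) * mul_inv_cancel₀ hD

theorem hasDerivAt_Tfun {X Y : ℝ → ℝ} {a x' y' : ℝ} (hX : HasDerivAt X x' a)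
    (hY : HasDerivAt Y y' a) (hD : 1 + a * X a * Y a ≠ 0) :
    HasDerivAt (Tfun X Y)
      (-(X a * Y a + a * (x' * Y a + X a * y')) / (1 + a * X a * Y a) ^ 2) a := by
  have hDeriv : HasDerivAt (fun a => 1 + a * X a * Y a)
      (X a * Y a + a * (x' * Y a + X a * y')) a := by
    have h := ((hasDerivAt_id a).mul (hX.mul hY)).const_add 1
    simp only [id_eq, one_mul] at h
    exact h.congr_of_eventuallyEq (.of_forall fun b => by simp only [Pi.mul_apply, id_eq]; ring)
  exact hDeriv.inv hD

section qfun

variable {X Y : ℝ → ℝ} {a : ℝ}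

theorem qfun_sub_one (h : X a + a * Y a ≠ 0) :
    qfun X Y a - 1 = (a ^ 2 - 1) * X a / (X a + a * Y a) := by
  unfold qfun
  field_simp
  ring

theorem qfun_sub_sq (h : X a + a * Y a ≠ 0) :
    qfun X Y a - a ^ 2 = a * Y a * (1 - a ^ 2) / (X a + a * Y a) := by
  unfold qfun
  field_simp
  ring

theorem qfun_sq_sub_sq (h : X a + a * Y a ≠ 0) :
    qfun X Y a ^ 2 - a ^ 2 = a ^ 2 * (a ^ 2 - 1) * (X a ^ 2 - Y a ^ 2) / (X a + a * Y a) ^ 2 := by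
  unfold qfun
  field_simp
  ring

theorem Tfun_mul_Tfun_sub_one_mul_div_eq (n : ℝ) (ha : a ≠ 0) (ha2 : 1 - a ^ 2 ≠ 0)
    (hD : 1 + a * X a * Y a ≠ 0) (hD' : X a + a * Y a ≠ 0)
    (hq1 : qfun X Y a ≠ 1) (hqb : qfun X Y a ≠ a ^ 2) :
    Tfun X Y a * (Tfun X Y a - 1) * (n * (qfun X Y a ^ 2 - a ^ 2))
        / (a ^ 2 * (qfun X Y a - a ^ 2) * (qfun X Y a - 1))
      = -(n * (X a ^ 2 - Y a ^ 2)) / ((1 - a ^ 2) * (1 + a * X a * Y a) ^ 2) := by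
  have hq1' := sub_ne_zero.mpr hq1
  have hqb' := sub_ne_zero.mpr hqb
  rw [qfun_sub_one hD'] at hq1' ⊢
  rw [qfun_sub_sq hD'] at hqb' ⊢
  have hX : X a ≠ 0 := by rintro h; simp [h] at hq1'
  have hY : Y a ≠ 0 := by rintro h; simp [h] at hqb'
  have ha2' : a ^ 2 - 1 ≠ 0 := by rw [← neg_sub]; exact neg_ne_zero.mpr ha2
  rw [qfun_sq_sub_sq hD', Tfun]
  field_simp
  ring

end qfun

theorem T_derivative_in_b_general (ν : ℝ) (n : ℕ) (X Y : ℝ → ℝ) (U : Set ℝ)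
    (hUsub : U ⊆ Set.Ioo (0 : ℝ) 1)
    (hX : ∀ a ∈ U, DifferentiableAt ℝ X a) (hY : ∀ a ∈ U, DifferentiableAt ℝ Y a)
    (hden : ∀ a ∈ U, 1 + a * X a * Y a ≠ 0)
    (hden' : ∀ a ∈ U, X a + a * Y a ≠ 0)
    (hq1 : ∀ a ∈ U, qfun X Y a ≠ 1)
    (hqb : ∀ a ∈ U, qfun X Y a ≠ a ^ 2)
    (heqX : ∀ a ∈ U, a * deriv X a
        = ν * X a - (1 - X a ^ 2) * (2 * (n : ℝ) * a / (1 - a ^ 2))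
            * (a * X a + Y a) / (1 + a * X a * Y a))
    (heqY : ∀ a ∈ U, a * deriv Y a
        = -(ν + 1) * Y a + (1 - Y a ^ 2) * (2 * (n : ℝ) * a / (1 - a ^ 2))
            * (X a + a * Y a) / (1 + a * X a * Y a)) :
    ∀ a ∈ U, (1 / (2 * a)) * deriv (Tfun X Y) a
      = Tfun X Y a * (Tfun X Y a - 1)
          * ((n : ℝ) * ((qfun X Y a) ^ 2 - a ^ 2))
          / (a ^ 2 * (qfun X Y a - a ^ 2) * (qfun X Y a - 1)) := by
  intro a ha
  obtain ⟨ha0, ha1⟩ := hUsub ha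
  have ha2 : 1 - a ^ 2 ≠ 0 := by nlinarith
  have hflow := mul_add_mul_deriv_eq_of_painleveVI _ _ _ _ _ _ _ (heqX a ha) (heqY a ha)
    (hden a ha)
  rw [(hasDerivAt_Tfun (hX a ha).hasDerivAt (hY a ha).hasDerivAt (hden a ha)).deriv, hflow,
    Tfun_mul_Tfun_sub_one_mul_div_eq _ ha0.ne' ha2 (hden a ha) (hden' a ha) (hq1 a ha) (hqb a ha)]
  field_simp

theorem T_derivative_in_b (ν : ℝ) (n : ℕ) (hn : 0 < n) (X Y : ℝ → ℝ) (U : Set ℝ)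
    (hUopen : IsOpen U) (hUsub : U ⊆ Set.Ioo (0 : ℝ) 1)
    (hX : ∀ a ∈ U, DifferentiableAt ℝ X a) (hY : ∀ a ∈ U, DifferentiableAt ℝ Y a)
    (hden : ∀ a ∈ U, 1 + a * X a * Y a ≠ 0)
    (hden' : ∀ a ∈ U, X a + a * Y a ≠ 0)
    (hq1 : ∀ a ∈ U, qfun X Y a ≠ 1)
    (hqb : ∀ a ∈ U, qfun X Y a ≠ a ^ 2)
    (heqX : ∀ a ∈ U, a * deriv X a
        = ν * X a - (1 - X a ^ 2) * (2 * (n : ℝ) * a / (1 - a ^ 2))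
            * (a * X a + Y a) / (1 + a * X a * Y a))
    (heqY : ∀ a ∈ U, a * deriv Y a
        = -(ν + 1) * Y a + (1 - Y a ^ 2) * (2 * (n : ℝ) * a / (1 - a ^ 2))
            * (X a + a * Y a) / (1 + a * X a * Y a)) :
    ∀ a ∈ U, (1 / (2 * a)) * deriv (Tfun X Y) a
      = Tfun X Y a * (Tfun X Y a - 1)
          * ((n : ℝ) * ((qfun X Y a) ^ 2 - a ^ 2))
          / (a ^ 2 * (qfun X Y a - a ^ 2) * (qfun X Y a - 1)) :=
  T_derivative_in_b_general ν n X Y U hUsub hX hY hden hden' hq1 hqb heqX heqY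
end

section
/- Suppose cₙ^{ν+1}, dₙ^{ν+1}, c₁^ν, d₁^ν, e, f, g, h, a are nonzero real numbers and n > 0 satisfying: n·cₙ^{ν+1} = a^{1/2}c₁^ν(h·dₙ^{ν+1} − g·cₙ^{ν+1}), n·dₙ^{ν+1} = a^{−1/2}d₁^ν(h·dₙ^{ν+1} − g·cₙ^{ν+1}), −n·c₁^ν = a^{−1/2}cₙ^{ν+1}(f·d₁^ν − e·c₁^ν), −n·d₁^ν = a^{1/2}dₙ^{ν+1}(f·d₁^ν − e·c₁^ν). Define μ_ν = (2a^{1/2}/(1−a²))(−a·h·c₁^ν + g·d₁^ν) and X = g/h, Y = −c₁^ν/d₁^ν. Then μ_ν = (2na/(1−a²))·(X+aY)/(1+aXY). -/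
/-!
Write `s = √a` and `W = h dn - g cn`. The first two relations say `n cn = s c W` and
`n s dn = d W`, so `n s W = h (n s dn) - s g (n cn) = W (h d - a g c)`; cancelling `W` gives
`h d - a g c = n s`. Since `(X + aY) / (1 + aXY) = (g d - a h c) / (h d - a g c)`, the right-hand
side is `2 n a (g d - a h c) / ((1 - a²) n s)`, which is `μ` because `a / s = s`.
-/

theorem mul_sub_sq_mul_eq_of_relations {K : Type*} [Field K] {n s c d cn dn g h : K}
    (hs : s ≠ 0) (hW : h * dn - g * cn ≠ 0)
    (hcn : n * cn = s * c * (h * dn - g * cn))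
    (hdn : n * dn = s⁻¹ * d * (h * dn - g * cn)) :
    h * d - s ^ 2 * g * c = n * s := by
  have hdn' : n * dn * s = d * (h * dn - g * cn) := by
    rw [hdn]; field_simp
  refine mul_right_cancel₀ hW ?_
  linear_combination (-h) * hdn' + (s * g) * hcn

theorem div_add_mul_neg_div_div_one_add_mul_mul_neg_div {K : Type*} [Field K] {a c d g h : K}
    (hh : h ≠ 0) (hd : d ≠ 0) :
    (g / h + a * -(c / d)) / (1 + a * (g / h) * -(c / d))
      = (g * d - a * h * c) / (h * d - a * g * c) := by
  have hnum : g / h + a * -(c / d) = (g * d - a * h * c) / (h * d) := by field_simp; ring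
  have hden : 1 + a * (g / h) * -(c / d) = (h * d - a * g * c) / (h * d) := by field_simp; ring
  rw [hnum, hden, div_div_div_cancel_right₀ (mul_ne_zero hh hd)]

theorem mu_in_terms_of_XY_general (n : ℕ) (hn : 0 < n) (a : ℝ) (ha : a ∈ Set.Ioo (0 : ℝ) 1)
    (cn1 dn1 c1 d1 g h : ℝ)
    (hd1 : d1 ≠ 0)
    (hh : h ≠ 0)
    (hrr1 : (n : ℝ) * cn1 = Real.sqrt a * c1 * (h * dn1 - g * cn1))
    (hrr2 : (n : ℝ) * dn1 = (Real.sqrt a)⁻¹ * d1 * (h * dn1 - g * cn1))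
    (hW1 : h * dn1 - g * cn1 ≠ 0) :
    (2 * Real.sqrt a / (1 - a ^ 2)) * (-(a * h * c1) + g * d1)
      = (2 * (n : ℝ) * a / (1 - a ^ 2)) * ((g / h) + a * (-(c1 / d1)))
          / (1 + a * (g / h) * (-(c1 / d1))) := by
  have hs : Real.sqrt a ≠ 0 := (Real.sqrt_pos.mpr ha.1).ne'
  have hn' : (n : ℝ) ≠ 0 := by positivity
  have ha2 : 1 - a ^ 2 ≠ 0 := by nlinarith [ha.1, ha.2]
  have hden := mul_sub_sq_mul_eq_of_relations hs hW1 hrr1 hrr2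
  rw [Real.sq_sqrt ha.1.le] at hden
  rw [mul_div_assoc (2 * (n : ℝ) * a / (1 - a ^ 2)),
    div_add_mul_neg_div_div_one_add_mul_mul_neg_div hh hd1, hden]
  field_simp
  linear_combination (g * d1 - a * h * c1) * Real.mul_self_sqrt ha.1.le

theorem mu_in_terms_of_XY (n : ℕ) (hn : 0 < n) (a : ℝ) (ha : a ∈ Set.Ioo (0 : ℝ) 1)
    (cn1 dn1 c1 d1 e f g h : ℝ)
    (hcn1 : cn1 ≠ 0) (hdn1 : dn1 ≠ 0) (hc1 : c1 ≠ 0) (hd1 : d1 ≠ 0)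
    (he : e ≠ 0) (hf : f ≠ 0) (hg : g ≠ 0) (hh : h ≠ 0)
    (hrr1 : (n : ℝ) * cn1 = Real.sqrt a * c1 * (h * dn1 - g * cn1))
    (hrr2 : (n : ℝ) * dn1 = (Real.sqrt a)⁻¹ * d1 * (h * dn1 - g * cn1))
    (hrr3 : -(n : ℝ) * c1 = (Real.sqrt a)⁻¹ * cn1 * (f * d1 - e * c1))
    (hrr4 : -(n : ℝ) * d1 = Real.sqrt a * dn1 * (f * d1 - e * c1))
    (hW1 : h * dn1 - g * cn1 ≠ 0) (hW2 : f * d1 - e * c1 ≠ 0)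
    (hXY : 1 + a * (g / h) * (-(c1 / d1)) ≠ 0) :
    (2 * Real.sqrt a / (1 - a ^ 2)) * (-(a * h * c1) + g * d1)
      = (2 * (n : ℝ) * a / (1 - a ^ 2)) * ((g / h) + a * (-(c1 / d1)))
          / (1 + a * (g / h) * (-(c1 / d1))) :=
  mu_in_terms_of_XY_general n hn a ha cn1 dn1 c1 d1 g h hd1 hh hrr1 hrr2 hW1
end
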